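/- arXiv:q-alg/9511005 — 4 statements merged into one kernel-verified Lean document; each statement's English description precedes it below -/
import Mathlib

section
/- The 4×4 matrix R(u) with rows (1-η/u, 0, 0, 0), (-ξ, 1, -η/u, 0), (ξ, -η/u, 1, 0), (ξ², -ξ, ξ, 1-η/u) satisfies the quantum Yang–Baxter equation with additive spectral parameter: R^{12}(u-v) R^{13}(u-w) R^{23}(v-w) = R^{23}(v-w) R^{13}(u-w) R^{12}(u-v) as operators on (ℂ²)^{⊗3}, for all u, v, w where the expressions are defined. -/
/-- Identification of `Fin 2 × Fin 2` with `Fin 4` in the basis order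
`(1⊗1, 1⊗2, 2⊗1, 2⊗2)`. -/
def idx : Fin 2 × Fin 2 → Fin 4 := fun p =>
  ⟨p.1.val * 2 + p.2.val, by have h1 := p.1.isLt; have h2 := p.2.isLt; omega⟩

/-- The deformed rational R-matrix with rows
`(1-η/u, 0, 0, 0), (-ξ, 1, -η/u, 0), (ξ, -η/u, 1, 0), (ξ², -ξ, ξ, 1-η/u)`,
acting on `ℂ² ⊗ ℂ²`. -/
noncomputable def Rmat (η ξ u : ℂ) : Matrix (Fin 2 × Fin 2) (Fin 2 × Fin 2) ℂ :=
  Matrix.of fun p q =>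
    (!![1 - η / u, 0, 0, 0;
        -ξ, 1, -η / u, 0;
        ξ, -η / u, 1, 0;
        ξ ^ 2, -ξ, ξ, 1 - η / u] : Matrix (Fin 4) (Fin 4) ℂ) (idx p) (idx q)

/-- `R¹² = R ⊗ I₂` acting on the first two factors of `(ℂ²)^⊗3`. -/
def R12 (M : Matrix (Fin 2 × Fin 2) (Fin 2 × Fin 2) ℂ) :
    Matrix (Fin 2 × Fin 2 × Fin 2) (Fin 2 × Fin 2 × Fin 2) ℂ :=
  Matrix.of fun p q => M (p.1, p.2.1) (q.1, q.2.1) * (if p.2.2 = q.2.2 then 1 else 0)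

/-- `R²³ = I₂ ⊗ R` acting on the last two factors of `(ℂ²)^⊗3`. -/
def R23 (M : Matrix (Fin 2 × Fin 2) (Fin 2 × Fin 2) ℂ) :
    Matrix (Fin 2 × Fin 2 × Fin 2) (Fin 2 × Fin 2 × Fin 2) ℂ :=
  Matrix.of fun p q => (if p.1 = q.1 then 1 else 0) * M (p.2.1, p.2.2) (q.2.1, q.2.2)

/-- `R¹³` acting on the first and third factors of `(ℂ²)^⊗3`. -/
def R13 (M : Matrix (Fin 2 × Fin 2) (Fin 2 × Fin 2) ℂ) :
    Matrix (Fin 2 × Fin 2 × Fin 2) (Fin 2 × Fin 2 × Fin 2) ℂ :=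
  Matrix.of fun p q => M (p.1, p.2.2) (q.1, q.2.2) * (if p.2.1 = q.2.1 then 1 else 0)

/-!
With `a = η/(u-v)`, `b = η/(u-w)`, `c = η/(v-w)` the matrix `Rmat` is affine in its coupling, and
the two sides of the Yang–Baxter equation agree entrywise modulo `a c - b (a + c)`. This vanishes
by the partial fraction identity `1/((u-v)(v-w)) = 1/(u-w) · (1/(u-v) + 1/(v-w))`, which is where
the additivity of the spectral parameter enters.
-/

def Rlin (ξ a : ℂ) : Matrix (Fin 2 × Fin 2) (Fin 2 × Fin 2) ℂ :=
  Matrix.of fun p q =>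
    (!![1 - a, 0, 0, 0;
        -ξ, 1, -a, 0;
        ξ, -a, 1, 0;
        ξ ^ 2, -ξ, ξ, 1 - a] : Matrix (Fin 4) (Fin 4) ℂ) (idx p) (idx q)

theorem Rmat_eq_Rlin (η ξ u : ℂ) : Rmat η ξ u = Rlin ξ (η / u) := by
  ext p q
  simp only [Rmat, Rlin, neg_div]

section

variable (M N K : Matrix (Fin 2 × Fin 2) (Fin 2 × Fin 2) ℂ)

theorem R12_mul_R13_mul_R23_apply (i j k i' j' k' : Fin 2) :
    (R12 M * R13 N * R23 K) (i, j, k) (i', j', k') =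
      ∑ x, ∑ y, ∑ z, M (i, j) (x, y) * N (x, k) (i', z) * K (y, z) (j', k') := by
  simp only [R12, R13, R23, Matrix.mul_apply, Matrix.of_apply, Fintype.sum_prod_type, Fin.sum_univ_two,
    mul_ite, ite_mul, mul_one, mul_zero, one_mul, zero_mul, Finset.sum_ite_irrel, Finset.sum_ite_eq,
    Finset.sum_ite_eq', Finset.sum_const_zero, Finset.mem_univ, if_true]
  ring

theorem R23_mul_R13_mul_R12_apply (i j k i' j' k' : Fin 2) :
    (R23 K * R13 N * R12 M) (i, j, k) (i', j', k') =
      ∑ x, ∑ y, ∑ z, K (j, k) (y, z) * N (i, z) (x, k') * M (x, y) (i', j') := by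
  simp only [R12, R13, R23, Matrix.mul_apply, Matrix.of_apply, Fintype.sum_prod_type, Fin.sum_univ_two,
    mul_ite, ite_mul, mul_one, mul_zero, one_mul, zero_mul, Finset.sum_ite_irrel, Finset.sum_ite_eq,
    Finset.sum_ite_eq', Finset.sum_const_zero, Finset.mem_univ, if_true]
  ring

end

theorem Rlin_yangBaxter_of_mul_eq (ξ a b c : ℂ) (h : a * c = b * (a + c)) :
    R12 (Rlin ξ a) * R13 (Rlin ξ b) * R23 (Rlin ξ c) =
      R23 (Rlin ξ c) * R13 (Rlin ξ b) * R12 (Rlin ξ a) := by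
  ext ⟨i, j, k⟩ ⟨i', j', k'⟩
  rw [R12_mul_R13_mul_R23_apply, R23_mul_R13_mul_R12_apply]
  simp only [Fin.sum_univ_two]
  fin_cases i <;> fin_cases j <;> fin_cases k <;> fin_cases i' <;> fin_cases j' <;> fin_cases k' <;>
    simp only [Rlin, idx, Matrix.of_apply, Matrix.cons_val', Matrix.cons_val_fin_one, Matrix.cons_val,
      Fin.reduceFinMk, Fin.isValue, Fin.val_zero, Fin.val_one, Nat.reduceMul, Nat.reduceAdd] <;>
    grind

/-- The deformed rational R-matrix satisfies the quantum Yang–Baxter equation with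
additive spectral parameter:
`R¹²(u-v) R¹³(u-w) R²³(v-w) = R²³(v-w) R¹³(u-w) R¹²(u-v)`. -/
theorem stmt_7 (η ξ u v w : ℂ) (huv : u ≠ v) (huw : u ≠ w) (hvw : v ≠ w) :
    R12 (Rmat η ξ (u - v)) * R13 (Rmat η ξ (u - w)) * R23 (Rmat η ξ (v - w)) =
      R23 (Rmat η ξ (v - w)) * R13 (Rmat η ξ (u - w)) * R12 (Rmat η ξ (u - v)) := by
  simp only [Rmat_eq_Rlin]
  apply Rlin_yangBaxter_of_mul_eq
  field_simp [sub_ne_zero.2 huv, sub_ne_zero.2 huw, sub_ne_zero.2 hvw]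
  ring
end

section
/- The classical r-matrix r(u,v) = c₂/(u-v) + h∧f, where c₂ = e⊗f + f⊗e + (1/2)h⊗h is the Casimir two-tensor of sl2 and h∧f = h⊗f - f⊗h, satisfies the classical Yang–Baxter equation [r^{12}(u₁,u₂), r^{13}(u₁,u₃)] + [r^{12}(u₁,u₂), r^{23}(u₂,u₃)] + [r^{13}(u₁,u₃), r^{23}(u₂,u₃)] = 0 in U(sl2)^{⊗3} (for pairwise distinct spectral parameters). -/
set_option maxHeartbeats 2000000


open scoped TensorProduct

/-- The classical r-matrix `r(u,v) = c₂/(u-v) + h∧f`, where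
`c₂ = e⊗f + f⊗e + (1/2)h⊗h` and `h∧f = h⊗f - f⊗h`, satisfies the classical
Yang–Baxter equation in `U(sl2)⊗U(sl2)⊗U(sl2)` (all triple tensors taken in
`A ⊗ (A ⊗ A)`, brackets being commutators of the associative algebra). -/
theorem stmt_9 (A : Type*) [Ring A] [Algebra ℂ A]
    (e f h : A)
    (hef : e * f - f * e = h)
    (hhe : h * e - e * h = 2 * e)
    (hhf : h * f - f * h = -(2 * f))
    (u₁ u₂ u₃ : ℂ) (h12 : u₁ ≠ u₂) (h13 : u₁ ≠ u₃) (h23 : u₂ ≠ u₃) :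
    let r12 : ℂ → ℂ → A ⊗[ℂ] (A ⊗[ℂ] A) := fun u v =>
      (u - v)⁻¹ • (e ⊗ₜ[ℂ] (f ⊗ₜ[ℂ] (1 : A)) + f ⊗ₜ[ℂ] (e ⊗ₜ[ℂ] (1 : A)) +
        (1 / 2 : ℂ) • (h ⊗ₜ[ℂ] (h ⊗ₜ[ℂ] (1 : A)))) +
      (h ⊗ₜ[ℂ] (f ⊗ₜ[ℂ] (1 : A)) - f ⊗ₜ[ℂ] (h ⊗ₜ[ℂ] (1 : A)))
    let r13 : ℂ → ℂ → A ⊗[ℂ] (A ⊗[ℂ] A) := fun u v =>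
      (u - v)⁻¹ • (e ⊗ₜ[ℂ] ((1 : A) ⊗ₜ[ℂ] f) + f ⊗ₜ[ℂ] ((1 : A) ⊗ₜ[ℂ] e) +
        (1 / 2 : ℂ) • (h ⊗ₜ[ℂ] ((1 : A) ⊗ₜ[ℂ] h))) +
      (h ⊗ₜ[ℂ] ((1 : A) ⊗ₜ[ℂ] f) - f ⊗ₜ[ℂ] ((1 : A) ⊗ₜ[ℂ] h))
    let r23 : ℂ → ℂ → A ⊗[ℂ] (A ⊗[ℂ] A) := fun u v =>
      (u - v)⁻¹ • ((1 : A) ⊗ₜ[ℂ] (e ⊗ₜ[ℂ] f) + (1 : A) ⊗ₜ[ℂ] (f ⊗ₜ[ℂ] e) +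
        (1 / 2 : ℂ) • ((1 : A) ⊗ₜ[ℂ] (h ⊗ₜ[ℂ] h))) +
      ((1 : A) ⊗ₜ[ℂ] (h ⊗ₜ[ℂ] f) - (1 : A) ⊗ₜ[ℂ] (f ⊗ₜ[ℂ] h))
    ⁅r12 u₁ u₂, r13 u₁ u₃⁆ + ⁅r12 u₁ u₂, r23 u₂ u₃⁆ + ⁅r13 u₁ u₃, r23 u₂ u₃⁆ = 0 := by
  intro r12 r13 r23
  have h2 : ∀ x : A, (2:ℂ) • x = 2 * x := fun x => by
    rw [Algebra.smul_def, map_ofNat]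
  have hfe : f * e = e * f - h := by rw [← hef]; abel
  have hhe' : h * e = e * h + (2:ℂ) • e := by rw [h2, ← hhe]; abel
  have hhf' : h * f = f * h - (2:ℂ) • f := by
    rw [h2, ← sub_add_cancel (h*f) (f*h), hhf]; abel
  simp only [r12, r13, r23, Ring.lie_def]
  simp only [smul_add, smul_sub, add_mul, sub_mul, mul_add, mul_sub,
    smul_mul_assoc, mul_smul_comm, smul_smul,
    Algebra.TensorProduct.tmul_mul_tmul, one_mul, mul_one,
    hfe, hhe', hhf',
    TensorProduct.tmul_add, TensorProduct.tmul_sub,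
    TensorProduct.add_tmul, TensorProduct.sub_tmul,
    TensorProduct.tmul_smul, ← TensorProduct.smul_tmul']
  have d12 : u₁ - u₂ ≠ 0 := sub_ne_zero.mpr h12
  have d13 : u₁ - u₃ ≠ 0 := sub_ne_zero.mpr h13
  have d23 : u₂ - u₃ ≠ 0 := sub_ne_zero.mpr h23
  match_scalars <;> (field_simp; try ring)
end

section
/- Let L(u) be a 2×2 matrix of formal series whose entries pairwise satisfy the RTT relation R(u-v) L¹(u) L²(v) = L²(v) L¹(u) R(u-v) with the deformed rational R-matrix R(u) having rows (1-η/u,0,0,0), (-ξ,1,-η/u,0), (ξ,-η/u,1,0), (ξ²,-ξ,ξ,1-η/u). Then the two expressions e₁₁(u)e₂₂(u-η) - e₂₁(u)e₁₂(u-η) - ξ e₁₁(u)e₁₂(u-η) and e₂₂(u)e₁₁(u-η) - e₁₂(u)e₂₁(u-η) + ξ e₁₂(u)e₁₁(u-η) are equal (both equal the quantum determinant qdet L(u)). -/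
/-- The deformed rational R-matrix, with scalar entries mapped into the coefficient
algebra `A`. -/
noncomputable def RmatA (A : Type*) [Ring A] [Algebra ℂ A] (η ξ u : ℂ) :
    Matrix (Fin 2 × Fin 2) (Fin 2 × Fin 2) A :=
  Matrix.of fun p q => algebraMap ℂ A
    ((!![1 - η / u, 0, 0, 0;
         -ξ, 1, -η / u, 0;
         ξ, -η / u, 1, 0;
         ξ ^ 2, -ξ, ξ, 1 - η / u] : Matrix (Fin 4) (Fin 4) ℂ) (idx p) (idx q))

/-- `L¹ = L ⊗ I₂`. -/
def L1 {A : Type*} [Ring A] (M : Matrix (Fin 2) (Fin 2) A) :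
    Matrix (Fin 2 × Fin 2) (Fin 2 × Fin 2) A :=
  Matrix.of fun p q => M p.1 q.1 * (if p.2 = q.2 then 1 else 0)

/-- `L² = I₂ ⊗ L`. -/
def L2 {A : Type*} [Ring A] (M : Matrix (Fin 2) (Fin 2) A) :
    Matrix (Fin 2 × Fin 2) (Fin 2 × Fin 2) A :=
  Matrix.of fun p q => (if p.1 = q.1 then 1 else 0) * M p.2 q.2

open Matrix

theorem vecMul_eq_smul_of_vecMulVec_mul_eq {α m : Type*} [Ring α] [Fintype m]
    {c r : m → α} {X Y : Matrix m m α} (h : vecMulVec c r * X = Y * vecMulVec c r)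
    {p : m} (hp : c p = 1) : r ᵥ* X = (Y *ᵥ c) p • r := by
  ext q
  simpa [vecMulVec_mul, mul_vecMulVec, vecMulVec_apply, hp] using congrFun (congrFun h p) q

theorem L1_mul_L2_apply {R : Type*} [Ring R] (M N : Matrix (Fin 2) (Fin 2) R)
    (p q : Fin 2 × Fin 2) : (L1 M * L2 N) p q = M p.1 q.1 * N p.2 q.2 := by
  simp [mul_apply, L1, L2, Fintype.sum_prod_type]

section QuantumDeterminant

variable (A : Type*) [Ring A] [Algebra ℂ A] (ξ : ℂ)

noncomputable def qdetCol : Fin 2 × Fin 2 → A :=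
  fun p => !![0, 1; -1, -algebraMap ℂ A ξ] p.1 p.2

noncomputable def qdetRow : Fin 2 × Fin 2 → A :=
  fun p => !![-algebraMap ℂ A ξ, 1; -1, 0] p.1 p.2

theorem qdetCol_zero_one : qdetCol A ξ (0, 1) = 1 := rfl

theorem qdetRow_zero_one : qdetRow A ξ (0, 1) = 1 := rfl

theorem qdetRow_one_zero : qdetRow A ξ (1, 0) = -1 := rfl

variable {A ξ} in
theorem RmatA_self_eq_vecMulVec {η : ℂ} (hη : η ≠ 0) :
    RmatA A η ξ η = vecMulVec (qdetCol A ξ) (qdetRow A ξ) := by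
  ext ⟨i, j⟩ ⟨k, l⟩
  fin_cases i <;> fin_cases j <;> fin_cases k <;> fin_cases l <;>
    simp [RmatA, qdetCol, qdetRow, idx, vecMulVec_apply, neg_div, div_self hη, sq]

variable {A} (M N : Matrix (Fin 2) (Fin 2) A)

theorem qdetRow_vecMul_L1_mul_L2_zero_one :
    (qdetRow A ξ ᵥ* (L1 M * L2 N)) (0, 1) =
      M 0 0 * N 1 1 - M 1 0 * N 0 1 - ξ • (M 0 0 * N 0 1) := by
  simp only [vecMul, dotProduct, Fintype.sum_prod_type, Fin.sum_univ_two, L1_mul_L2_apply, qdetRow,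
    of_apply, cons_val', cons_val_zero, cons_val_one, cons_val_fin_one, Algebra.smul_def]
  noncomm_ring

theorem qdetRow_vecMul_L1_mul_L2_one_zero :
    (qdetRow A ξ ᵥ* (L1 M * L2 N)) (1, 0) =
      -(M 1 1 * N 0 0 - M 0 1 * N 1 0 + ξ • (M 0 1 * N 0 0)) := by
  simp only [vecMul, dotProduct, Fintype.sum_prod_type, Fin.sum_univ_two, L1_mul_L2_apply, qdetRow,
    of_apply, cons_val', cons_val_zero, cons_val_one, cons_val_fin_one, Algebra.smul_def]
  noncomm_ring

end QuantumDeterminant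

/-- If the matrix `L(u) = (e_{ij}(u))` satisfies the RTT relation with the deformed
rational R-matrix, then the two expressions for the quantum determinant agree:
`e₁₁(u)e₂₂(u-η) - e₂₁(u)e₁₂(u-η) - ξ e₁₁(u)e₁₂(u-η)
  = e₂₂(u)e₁₁(u-η) - e₁₂(u)e₂₁(u-η) + ξ e₁₂(u)e₁₁(u-η)`. -/
theorem stmt_13 (A : Type*) [Ring A] [Algebra ℂ A]
    (η ξ : ℂ) (hη : η ≠ 0)
    (L : ℂ → Matrix (Fin 2) (Fin 2) A)
    (hRTT : ∀ u v : ℂ, u ≠ v →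
      RmatA A η ξ (u - v) * L1 (L u) * L2 (L v) =
        L2 (L v) * L1 (L u) * RmatA A η ξ (u - v)) :
    ∀ u : ℂ,
      L u 0 0 * L (u - η) 1 1 - L u 1 0 * L (u - η) 0 1 -
          ξ • (L u 0 0 * L (u - η) 0 1) =
        L u 1 1 * L (u - η) 0 0 - L u 0 1 * L (u - η) 1 0 +
          ξ • (L u 0 1 * L (u - η) 0 0) := by
  intro u
  have hRTT_η := hRTT u (u - η) (Ne.symm (sub_eq_self.not.mpr hη))
  rw [sub_sub_cancel, RmatA_self_eq_vecMulVec hη, mul_assoc] at hRTT_η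
  have hrow := vecMul_eq_smul_of_vecMulVec_mul_eq hRTT_η (qdetCol_zero_one A ξ)
  have h01 := congrFun hrow (0, 1)
  have h10 := congrFun hrow (1, 0)
  rw [qdetRow_vecMul_L1_mul_L2_zero_one] at h01
  rw [qdetRow_vecMul_L1_mul_L2_one_zero] at h10
  simp only [Pi.smul_apply, smul_eq_mul, qdetRow_zero_one, qdetRow_one_zero, mul_one,
    mul_neg] at h01 h10
  exact h01.trans (neg_inj.mp h10).symm
end

section
/- The matrix R₀ = [[1,0,0,0],[-ξ,1,0,0],[ξ,0,1,0],[ξ²,-ξ,ξ,1]] (the constant part of the deformed rational R-matrix) satisfies the constant quantum Yang–Baxter equation R₀^{12} R₀^{13} R₀^{23} = R₀^{23} R₀^{13} R₀^{12} on ℂ²⊗ℂ²⊗ℂ², and is unipotent with R₀^{21} = R₀^{-1}. -/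
/-- The constant part `R₀` of the deformed rational R-matrix, acting on `ℂ²⊗ℂ²`. -/
def R0 (ξ : ℂ) : Matrix (Fin 2 × Fin 2) (Fin 2 × Fin 2) ℂ :=
  Matrix.of fun p q =>
    (!![1, 0, 0, 0;
        -ξ, 1, 0, 0;
        ξ, 0, 1, 0;
        ξ ^ 2, -ξ, ξ, 1] : Matrix (Fin 4) (Fin 4) ℂ) (idx p) (idx q)

/-- The flip `P` of the two tensor factors of `ℂ²⊗ℂ²`. -/
def Pflip : Matrix (Fin 2 × Fin 2) (Fin 2 × Fin 2) ℂ :=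
  Matrix.of fun p q => if p.1 = q.2 ∧ p.2 = q.1 then 1 else 0

/-!
With `F = E₂₁` and `H = diag(1, -1)` on `ℂ²`, one has `R₀(ξ) = 1 + ξ r + ξ² r² / 2` for the Jordanian
r-matrix `r = F ⊗ H - H ⊗ F`, and `r³ = 0`. Hence `R₀(ξ) = exp(ξ r)` is a one-parameter group of
unipotent matrices, and since the flip sends `r` to `-r`, it sends `R₀(ξ)` to `R₀(-ξ) = R₀(ξ)⁻¹`.
The Yang–Baxter equation is a polynomial identity in `ξ`, checked entrywise.
-/

theorem Pflip_mul_apply (M : Matrix (Fin 2 × Fin 2) (Fin 2 × Fin 2) ℂ) (p q : Fin 2 × Fin 2) :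
    (Pflip * M) p q = M p.swap q := by
  rw [Matrix.mul_apply, Finset.sum_eq_single p.swap]
  · simp [Pflip]
  · rintro r - hr
    simp only [Pflip, Matrix.of_apply]
    rw [if_neg fun h => hr (Prod.ext h.2.symm h.1.symm), zero_mul]
  · simp

theorem mul_Pflip_apply (M : Matrix (Fin 2 × Fin 2) (Fin 2 × Fin 2) ℂ) (p q : Fin 2 × Fin 2) :
    (M * Pflip) p q = M p q.swap := by
  rw [Matrix.mul_apply, Finset.sum_eq_single q.swap]
  · simp [Pflip]
  · rintro r - hr
    simp only [Pflip, Matrix.of_apply]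
    rw [if_neg fun h => hr (Prod.ext h.1 h.2), mul_zero]
  · simp

theorem Pflip_mul_R0_mul_Pflip (ξ : ℂ) : Pflip * R0 ξ * Pflip = R0 (-ξ) := by
  ext ⟨a, b⟩ ⟨c, d⟩
  rw [mul_Pflip_apply, Pflip_mul_apply]
  fin_cases a <;> fin_cases b <;> fin_cases c <;> fin_cases d <;> simp [R0, idx]

theorem R0_zero : R0 0 = 1 := by
  ext ⟨a, b⟩ ⟨c, d⟩
  fin_cases a <;> fin_cases b <;> fin_cases c <;> fin_cases d <;> simp [R0, idx]

theorem R0_add (ξ η : ℂ) : R0 (ξ + η) = R0 ξ * R0 η := by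
  ext ⟨a, b⟩ ⟨c, d⟩
  simp only [Matrix.mul_apply, Fintype.sum_prod_type, Fin.sum_univ_two]
  fin_cases a <;> fin_cases b <;> fin_cases c <;> fin_cases d <;> simp [R0, idx] <;> ring

theorem R0_neg_mul_R0 (ξ : ℂ) : R0 (-ξ) * R0 ξ = 1 := by
  rw [← R0_add, neg_add_cancel, R0_zero]

theorem R0_sub_one_pow_three (ξ : ℂ) : (R0 ξ - 1) ^ 3 = 0 := by
  ext ⟨a, b⟩ ⟨c, d⟩
  simp only [pow_succ, pow_zero, one_mul, Matrix.mul_apply, Fintype.sum_prod_type, Fin.sum_univ_two]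
  fin_cases a <;> fin_cases b <;> fin_cases c <;> fin_cases d <;> simp [R0, idx]

set_option maxHeartbeats 1000000 in
theorem R0_yangBaxter (ξ : ℂ) :
    R12 (R0 ξ) * R13 (R0 ξ) * R23 (R0 ξ) = R23 (R0 ξ) * R13 (R0 ξ) * R12 (R0 ξ) := by
  ext ⟨a, b, c⟩ ⟨d, e, f⟩
  simp only [Matrix.mul_apply, Fintype.sum_prod_type, Fin.sum_univ_two, R12, R13, R23,
    Matrix.of_apply]
  fin_cases a <;> fin_cases b <;> fin_cases c <;> fin_cases d <;> fin_cases e <;> fin_cases f <;>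
    simp [R0, idx] <;> ring

/-- `R₀` satisfies the constant quantum Yang–Baxter equation
`R₀¹² R₀¹³ R₀²³ = R₀²³ R₀¹³ R₀¹²`, is unipotent (`R₀ - 1` is nilpotent), and
`R₀²¹ = P R₀ P` is the inverse of `R₀`. -/
theorem stmt_17 (ξ : ℂ) :
    R12 (R0 ξ) * R13 (R0 ξ) * R23 (R0 ξ) = R23 (R0 ξ) * R13 (R0 ξ) * R12 (R0 ξ) ∧
    IsNilpotent (R0 ξ - 1) ∧
    (Pflip * R0 ξ * Pflip) * R0 ξ = 1 ∧ R0 ξ * (Pflip * R0 ξ * Pflip) = 1 := by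
  have flip_mul_R0 : (Pflip * R0 ξ * Pflip) * R0 ξ = 1 := by
    rw [Pflip_mul_R0_mul_Pflip, R0_neg_mul_R0]
  exact ⟨R0_yangBaxter ξ, ⟨3, R0_sub_one_pow_three ξ⟩, flip_mul_R0, mul_eq_one_comm.mp flip_mul_R0⟩
end
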